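/- arXiv:1303.6251 — 3 statements merged into one kernel-verified Lean document; each statement's English description precedes it below -/
import Mathlib

section
/- Let M be a compact Riemannian manifold and define c(x₁,...,x_m) = inf_{y∈M} ∑_{i=1}^m (1/2)d²(x_i, y). Then c is superdifferentiable with respect to the first variable at every point: for all (x₁,...,x_m) there exists p ∈ T_{x₁}M such that for all small v ∈ T_{x₁}M, c(exp_{x₁}v, x₂,...,x_m) ≤ c(x₁,...,x_m) + ⟨p, v⟩ + o(|v|). -/
open scoped BigOperators RealInnerProductSpace

/-- For the cost `c(x₁,…,x_m) = inf_y ∑ d²(xᵢ,y)/2` on a compact Riemannian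
manifold (abstracted by a compact metric space with tangent space `E` and exponential maps
`exp`; the Riemannian fact that `x ↦ d²(x,y)/2` is superdifferentiable everywhere is the
hypothesis `hsd`), the cost `c` is superdifferentiable with respect to the first variable at
every point: there is `p ∈ T_{x₁}M` with
`c(exp_{x₁} v, x₂, …, x_m) ≤ c(x₁,…,x_m) + ⟪p, v⟫ + ε‖v‖` for small `v`. -/
theorem stmt_1 {M : Type*} [MetricSpace M] [CompactSpace M] [Nonempty M]
    {E : Type*} [NormedAddCommGroup E] [InnerProductSpace ℝ E]
    (exp : M → E → M) (m : ℕ) (x : Fin (m + 1) → M)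
    (hsd : ∀ y x₀ : M, ∃ p : E, ∀ ε > 0, ∃ δ > 0, ∀ v : E, ‖v‖ < δ →
      dist (exp x₀ v) y ^ 2 / 2 ≤ dist x₀ y ^ 2 / 2 + ⟪p, v⟫ + ε * ‖v‖) :
    ∃ p : E, ∀ ε > 0, ∃ δ > 0, ∀ v : E, ‖v‖ < δ →
      (⨅ y : M, ∑ i, dist (Function.update x 0 (exp (x 0) v) i) y ^ 2 / 2)
        ≤ (⨅ y : M, ∑ i, dist (x i) y ^ 2 / 2) + ⟪p, v⟫ + ε * ‖v‖ := by
  set F : M → ℝ := fun y => ∑ i, dist (x i) y ^ 2 / 2 with hF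
  have hFc : Continuous F := by
    apply continuous_finset_sum
    intro i _
    exact ((continuous_const.dist continuous_id).pow 2).div_const 2
  obtain ⟨y₀, -, hy₀⟩ := IsCompact.exists_isMinOn isCompact_univ ⟨Classical.arbitrary M, trivial⟩
    hFc.continuousOn
  obtain ⟨p, hp⟩ := hsd y₀ (x 0)
  refine ⟨p, fun ε hε => ?_⟩
  obtain ⟨δ, hδ, h⟩ := hp ε hε
  refine ⟨δ, hδ, fun v hv => ?_⟩
  have hinf : (⨅ y : M, F y) = F y₀ := by
    refine le_antisymm (ciInf_le ⟨0, ?_⟩ y₀) (le_ciInf fun y => hy₀ (Set.mem_univ y))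
    rintro r ⟨y, rfl⟩
    exact Finset.sum_nonneg fun i _ => by positivity
  calc (⨅ y : M, ∑ i, dist (Function.update x 0 (exp (x 0) v) i) y ^ 2 / 2)
      ≤ ∑ i, dist (Function.update x 0 (exp (x 0) v) i) y₀ ^ 2 / 2 := by
        refine ciInf_le ⟨0, ?_⟩ y₀
        rintro r ⟨y, rfl⟩
        exact Finset.sum_nonneg fun i _ => by positivity
    _ ≤ F y₀ + ⟪p, v⟫ + ε * ‖v‖ := by
        simp only [hF, Fin.sum_univ_succ, Function.update_self]
        have heq : ∀ i : Fin m, Function.update x 0 (exp (x 0) v) i.succ = x i.succ :=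
          fun i => Function.update_of_ne (Fin.succ_ne_zero i) _ _
        have := h v hv
        simp only [heq]
        linarith
    _ = (⨅ y : M, F y) + ⟪p, v⟫ + ε * ‖v‖ := by rw [hinf]
end

section
/- Let M be a compact Riemannian manifold and c(x₁,...,x_m) = inf_{y∈M} ∑_{i=1}^m (1/2)d²(x_i, y). If c is differentiable with respect to x₁ at (x₁,...,x_m), then there is a unique y minimizing y ↦ ∑_{i=1}^m (1/2)d²(x_i,y), and moreover y = exp_{x₁}(∇_{x₁} c(x₁,...,x_m)). -/
open scoped BigOperators RealInnerProductSpace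

/-- `f` has gradient `p` at `x` in the sense of the exponential chart `exp`:
`f(exp_x v) = f(x) + ⟪p,v⟫ + o(‖v‖)`. -/
def HasGradAt {M E : Type*} [MetricSpace M] [NormedAddCommGroup E] [InnerProductSpace ℝ E]
    (exp : M → E → M) (f : M → ℝ) (x : M) (p : E) : Prop :=
  ∀ ε > 0, ∃ δ > 0, ∀ v : E, ‖v‖ < δ → |f (exp x v) - f x - ⟪p, v⟫| ≤ ε * ‖v‖

/-- If `f ≤ g`, `f x = g x`, and both have gradients in the exponential-chart sense at `x`,
then the gradients agree. -/
lemma hasGradAt_unique_of_le {M E : Type*} [MetricSpace M] [NormedAddCommGroup E]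
    [InnerProductSpace ℝ E] (exp : M → E → M) (f g : M → ℝ) (x : M) (p q : E)
    (hf : HasGradAt exp f x p) (hg : HasGradAt exp g x q)
    (hle : ∀ z, f z ≤ g z) (heq : f x = g x) : p = q := by
  by_contra hne
  have hpq : 0 < ‖p - q‖ := norm_pos_iff.mpr (sub_ne_zero.mpr hne)
  obtain ⟨δ₁, hδ₁, h1⟩ := hf (‖p - q‖ / 4) (by positivity)
  obtain ⟨δ₂, hδ₂, h2⟩ := hg (‖p - q‖ / 4) (by positivity)
  set t : ℝ := min δ₁ δ₂ / (2 * (‖p - q‖ + 1)) with ht_def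
  have hmin : 0 < min δ₁ δ₂ := lt_min hδ₁ hδ₂
  have ht : 0 < t := by positivity
  set v : E := t • (p - q) with hv_def
  have hnv : ‖v‖ = t * ‖p - q‖ := by
    rw [hv_def, norm_smul, Real.norm_of_nonneg ht.le]
  have hvlt : ‖v‖ < min δ₁ δ₂ := by
    rw [hnv, ht_def, div_mul_eq_mul_div, div_lt_iff₀ (by positivity)]
    nlinarith
  have H1 := h1 v (hvlt.trans_le (min_le_left _ _))
  have H2 := h2 v (hvlt.trans_le (min_le_right _ _))
  rw [abs_le] at H1 H2
  have hiv : ⟪p, v⟫ - ⟪q, v⟫ = t * ‖p - q‖ ^ 2 := by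
    rw [hv_def, real_inner_smul_right, real_inner_smul_right,
      ← mul_sub, ← inner_sub_left, real_inner_self_eq_norm_sq]
  have hfg := hle (exp x v)
  nlinarith [H1.1, H2.2, hiv, hnv, hpq, ht, heq, hfg, mul_pos ht (mul_pos hpq hpq)]

/-- Let `c(x₁,…,x_m) = inf_y ∑ d²(xᵢ,y)/2` on a compact Riemannian manifold
(abstracted; `hgrad` is the Riemannian fact that at any minimizer `y` — necessarily outside
the cut locus of `x₁` — the map `z ↦ d²(z,y)/2` is differentiable at `x₁` with gradient `q`
satisfying `exp_{x₁} q = y`). If `c` is differentiable with respect to `x₁` with gradient `p`,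
then there is a unique `y` minimizing `y ↦ ∑ d²(xᵢ,y)/2`, namely
`y = exp_{x₁}(∇_{x₁} c(x₁,…,x_m))`. -/
theorem stmt_2 {M : Type*} [MetricSpace M] [CompactSpace M] [Nonempty M]
    {E : Type*} [NormedAddCommGroup E] [InnerProductSpace ℝ E]
    (exp : M → E → M) (m : ℕ) (x : Fin (m + 1) → M)
    (hgrad : ∀ y : M, (∀ z : M, ∑ i, dist (x i) y ^ 2 / 2 ≤ ∑ i, dist (x i) z ^ 2 / 2) →
      ∃ q : E, HasGradAt exp (fun z => dist z y ^ 2 / 2) (x 0) q ∧ exp (x 0) q = y)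
    (p : E)
    (hdiff : HasGradAt exp
      (fun z => ⨅ y : M, ∑ i, dist (Function.update x 0 z i) y ^ 2 / 2) (x 0) p) :
    (∀ z : M, ∑ i, dist (x i) (exp (x 0) p) ^ 2 / 2 ≤ ∑ i, dist (x i) z ^ 2 / 2) ∧
    (∀ y : M, (∀ z : M, ∑ i, dist (x i) y ^ 2 / 2 ≤ ∑ i, dist (x i) z ^ 2 / 2) →
      y = exp (x 0) p) := by
  have hupd : Function.update x 0 (x 0) = x := Function.update_eq_self 0 x
  have hbdd : ∀ z : M, BddBelow (Set.range fun y : M =>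
      ∑ i, dist (Function.update x 0 z i) y ^ 2 / 2) := by
    intro z
    refine ⟨0, ?_⟩
    rintro r ⟨y, rfl⟩
    exact Finset.sum_nonneg fun i _ => by positivity
  -- existence of a minimizer
  have hcont : Continuous fun y : M => ∑ i, dist (x i) y ^ 2 / 2 :=
    continuous_finset_sum _ fun i _ =>
      ((continuous_const.dist continuous_id).pow 2).div_const 2
  obtain ⟨y₀, -, hy₀⟩ := isCompact_univ.exists_isMinOn Set.univ_nonempty hcont.continuousOn
  have h0 : ∀ z : M, ∑ i, dist (x i) y₀ ^ 2 / 2 ≤ ∑ i, dist (x i) z ^ 2 / 2 :=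
    fun z => isMinOn_iff.mp hy₀ z (Set.mem_univ z)
  have key : ∀ y : M, (∀ z : M, ∑ i, dist (x i) y ^ 2 / 2 ≤ ∑ i, dist (x i) z ^ 2 / 2) →
      y = exp (x 0) p := by
    intro y hy
    obtain ⟨q, hq, hexp⟩ := hgrad y hy
    have hsum : ∀ z : M, ∑ i, dist (Function.update x 0 z i) y ^ 2 / 2
        = dist z y ^ 2 / 2 + ∑ i ∈ Finset.univ \ {0}, dist (x i) y ^ 2 / 2 := by
      intro z
      have e : ∀ i, dist (Function.update x 0 z i) y ^ 2 / 2
          = Function.update (fun j => dist (x j) y ^ 2 / 2) 0 (dist z y ^ 2 / 2) i := by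
        intro i
        rcases eq_or_ne i 0 with rfl | h
        · simp
        · simp [Function.update_of_ne h]
      rw [Finset.sum_congr rfl fun i _ => e i,
        Finset.sum_update_of_mem (Finset.mem_univ 0)]
    -- the full sum (as a function of z) has gradient q at x 0
    have hg : HasGradAt exp (fun z => ∑ i, dist (Function.update x 0 z i) y ^ 2 / 2)
        (x 0) q := by
      intro ε hε
      obtain ⟨δ, hδ, h⟩ := hq ε hε
      refine ⟨δ, hδ, fun v hv => ?_⟩
      have := h v hv
      simp only [hsum] at *
      convert this using 2
      ring
    -- c(x 0) equals the minimal value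
    have hceq : (⨅ y' : M, ∑ i, dist (Function.update x 0 (x 0) i) y' ^ 2 / 2)
        = ∑ i, dist (Function.update x 0 (x 0) i) y ^ 2 / 2 := by
      rw [hupd]
      refine le_antisymm ?_ (le_ciInf hy)
      have := ciInf_le (by simpa [hupd] using hbdd (x 0)) y
      simpa using this
    have hcle : ∀ z : M, (⨅ y' : M, ∑ i, dist (Function.update x 0 z i) y' ^ 2 / 2)
        ≤ ∑ i, dist (Function.update x 0 z i) y ^ 2 / 2 :=
      fun z => ciInf_le (hbdd z) y
    have hpq : p = q :=
      hasGradAt_unique_of_le exp _ _ (x 0) p q hdiff hg hcle hceq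
    rw [← hexp, hpq]
  refine ⟨?_, key⟩
  have := key y₀ h0
  rw [← this]
  exact h0
end

section
/- For each i, the measure γ_i := (π_i, ȳ)_# γ on M × M is an optimal plan for the two-marginal Monge–Kantorovich problem with cost d²(x,y) and marginals μ_i and the barycenter ν = ȳ_# γ. -/
/-!
Let `ν = ȳ_# γ` and let `π` be any coupling of `μᵢ` and `ν`. Glue `π` to the plan
`(ȳ, id)_# γ` along their common marginal `ν`, and replace the coordinate `xᵢ` by the point that
`π` couples with `ȳ(x)`. This gives a multi-marginal coupling `γ'` of the `μⱼ`, and testing the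
infimum defining the cost of `γ'` at the old barycentre `ȳ(x)` shows
`∫ c dγ' ≤ ∫ c dγ - ½ ∫ d²(xᵢ, ȳ) dγ + ½ ∫ d² dπ`, because `c(x) = ½ ∑ⱼ d²(xⱼ, ȳ(x))` holds
`γ`-a.e. Optimality of `γ` then gives `∫ d²(xᵢ, ȳ) dγ ≤ ∫ d² dπ`.
-/

open MeasureTheory
open scoped BigOperators

/-- The multi-marginal barycenter cost `c(x₁,…,x_m) = inf_y ∑ d²(xᵢ,y)/2`. -/
noncomputable def mmcost {M : Type*} [MetricSpace M] {m : ℕ} (x : Fin m → M) : ℝ :=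
  ⨅ y : M, ∑ i, dist (x i) y ^ 2 / 2

/-- `γ` is a coupling of the marginals `μ i`. -/
def IsCoupling {M : Type*} [MeasurableSpace M] {m : ℕ}
    (γ : Measure (Fin m → M)) (μ : Fin m → Measure M) : Prop :=
  ∀ i, γ.map (fun x => x i) = μ i

open ProbabilityTheory

theorem exists_gluing {X Y Z : Type*} [MeasurableSpace X] [MeasurableSpace Y] [MeasurableSpace Z]
    [StandardBorelSpace Y] [Nonempty Y] [StandardBorelSpace Z] [Nonempty Z]
    (ρ : Measure (X × Y)) (π : Measure (X × Z)) [IsFiniteMeasure ρ] [IsFiniteMeasure π]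
    (h : ρ.fst = π.fst) :
    ∃ θ : Measure (X × Y × Z), IsFiniteMeasure θ ∧
      θ.map (Prod.map id Prod.fst) = ρ ∧ θ.map (Prod.map id Prod.snd) = π := by
  refine ⟨ρ.fst ⊗ₘ (ρ.condKernel ×ₖ π.condKernel), inferInstance, ?_, ?_⟩
  · rw [← Measure.compProd_map measurable_fst, ← Kernel.fst_eq, Kernel.fst_prod, ρ.disintegrate]
  · rw [← Measure.compProd_map measurable_snd, ← Kernel.snd_eq, Kernel.snd_prod, h,
      π.disintegrate]

section BarycenterCost

variable {M : Type*} [MetricSpace M] {n : ℕ}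

lemma mmcost_le_sum (x : Fin n → M) (y : M) : mmcost x ≤ ∑ i, dist (x i) y ^ 2 / 2 :=
  ciInf_le ⟨0, by rintro _ ⟨z, rfl⟩; positivity⟩ y

lemma mmcost_eq_of_forall_le {x : Fin n → M} {y : M}
    (h : ∀ z, ∑ i, dist (x i) y ^ 2 ≤ ∑ i, dist (x i) z ^ 2) :
    mmcost x = ∑ i, dist (x i) y ^ 2 / 2 := by
  have : Nonempty M := ⟨y⟩
  refine le_antisymm (mmcost_le_sum x y) (le_ciInf fun z => ?_)
  rw [← Finset.sum_div, ← Finset.sum_div]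
  linarith [h z]

lemma mmcost_update_add_le (x : Fin n → M) (i : Fin n) (z y : M) :
    mmcost (Function.update x i z) + dist (x i) y ^ 2 / 2
      ≤ ∑ j, dist (x j) y ^ 2 / 2 + dist z y ^ 2 / 2 := by
  have h := mmcost_le_sum (Function.update x i z) y
  rw [← Finset.add_sum_erase _ _ (Finset.mem_univ i)] at h ⊢
  rw [Finset.sum_congr rfl fun j hj => by rw [Function.update_of_ne (Finset.ne_of_mem_erase hj)],
    Function.update_self] at h
  linarith

@[fun_prop]
lemma continuous_mmcost [CompactSpace M] : Continuous (mmcost : (Fin n → M) → ℝ) := by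
  have := isCompact_univ.continuous_sInf
    (f := fun (x : Fin n → M) (y : M) => ∑ i, dist (x i) y ^ 2 / 2) (by fun_prop)
  simp only [Set.image_univ, sInf_range] at this
  exact this

end BarycenterCost

theorem exists_update_marginal_integral_mmcost_le {M : Type*} [MetricSpace M] [CompactSpace M]
    [Nonempty M] [MeasurableSpace M] [BorelSpace M] {n : ℕ}
    (ρ : Measure (M × (Fin n → M))) (π : Measure (M × M)) [IsFiniteMeasure ρ] [IsFiniteMeasure π]
    (h : ρ.fst = π.fst) (i : Fin n) :
    ∃ γ' : Measure (Fin n → M),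
      (∀ j ≠ i, γ'.map (fun x => x j) = ρ.snd.map (fun x => x j)) ∧
      γ'.map (fun x => x i) = π.snd ∧
      ∫ x, mmcost x ∂γ' + ∫ q, dist (q.2 i) q.1 ^ 2 / 2 ∂ρ
        ≤ ∫ q, ∑ j, dist (q.2 j) q.1 ^ 2 / 2 ∂ρ + ∫ q, dist q.2 q.1 ^ 2 / 2 ∂π := by
  obtain ⟨θ, hθ, rfl, rfl⟩ := exists_gluing ρ π h
  have hu : Continuous fun p : M × (Fin n → M) × M => Function.update p.2.1 i p.2.2 := by
    fun_prop
  refine ⟨θ.map fun p => Function.update p.2.1 i p.2.2, fun j hj => ?_, ?_, ?_⟩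
  · rw [Measure.snd, Measure.map_map (by fun_prop) hu.measurable,
      Measure.map_map (by fun_prop) (by fun_prop), Measure.map_map (by fun_prop) (by fun_prop)]
    congr 1
    funext p
    simp [Function.update_of_ne hj]
  · rw [Measure.snd, Measure.map_map (by fun_prop) hu.measurable,
      Measure.map_map (by fun_prop) (by fun_prop)]
    congr 1
    funext p
    simp
  · have integrable_of_continuous {f : M × (Fin n → M) × M → ℝ} (hf : Continuous f) :
        Integrable f θ :=
      hf.integrable_of_hasCompactSupport (HasCompactSupport.of_compactSpace f)
    rw [integral_map hu.aemeasurable continuous_mmcost.aestronglyMeasurable,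
      integral_map (by fun_prop) (by fun_prop), integral_map (by fun_prop) (by fun_prop),
      integral_map (by fun_prop) (by fun_prop), ← integral_add, ← integral_add]
    · exact integral_mono (integrable_of_continuous (by fun_prop))
        (integrable_of_continuous (by fun_prop))
        fun p => mmcost_update_add_le p.2.1 i p.2.2 p.1
    all_goals exact integrable_of_continuous (by fun_prop)

theorem stmt_11_general {M : Type*} [MetricSpace M] [CompactSpace M] [Nonempty M]
    [MeasurableSpace M] [BorelSpace M]
    (m : ℕ)
    (μ : Fin (m + 1) → Measure M) [∀ i, IsProbabilityMeasure (μ i)]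
    (γ : Measure (Fin (m + 1) → M))
    (hγm : IsCoupling γ μ)
    (hopt : ∀ γ' : Measure (Fin (m + 1) → M), IsCoupling γ' μ →
      ∫ x, mmcost x ∂γ ≤ ∫ x, mmcost x ∂γ')
    (ybar : (Fin (m + 1) → M) → M) (hybarm : Measurable ybar)
    (hybar : ∀ᵐ x ∂γ, ∀ z : M, ∑ i, dist (x i) (ybar x) ^ 2 ≤ ∑ i, dist (x i) z ^ 2)
    (i : Fin (m + 1)) :
    (γ.map (fun x => (x i, ybar x))).map Prod.fst = μ i ∧
    (γ.map (fun x => (x i, ybar x))).map Prod.snd = γ.map ybar ∧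
    ∀ π : Measure (M × M), π.map Prod.fst = μ i → π.map Prod.snd = γ.map ybar →
      ∫ p, dist p.1 p.2 ^ 2 ∂(γ.map (fun x => (x i, ybar x)))
        ≤ ∫ p, dist p.1 p.2 ^ 2 ∂π := by
  have hmi : Measurable fun x => (x i, ybar x) := (measurable_pi_apply i).prodMk hybarm
  refine ⟨by rw [Measure.map_map measurable_fst hmi]; exact hγm i,
    by rw [Measure.map_map measurable_snd hmi]; rfl, fun π hπ1 hπ2 => ?_⟩
  have : IsProbabilityMeasure γ := by
    have : IsProbabilityMeasure (γ.map fun x => x 0) := hγm 0 ▸ inferInstance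
    exact Measure.isProbabilityMeasure_of_map fun x => x 0
  have : IsProbabilityMeasure π := by
    have : IsProbabilityMeasure (π.map Prod.fst) := hπ1 ▸ inferInstance
    exact Measure.isProbabilityMeasure_of_map Prod.fst
  have hρ : Measurable fun x => (ybar x, x) := hybarm.prodMk measurable_id
  obtain ⟨γ', hother, hi, hle⟩ := exists_update_marginal_integral_mmcost_le
    (γ.map fun x => (ybar x, x)) (π.map Prod.swap)
    (by rw [Measure.fst_map_prodMk (Y := fun x => x) measurable_id, Measure.fst_map_swap]
        exact hπ2.symm) i
  have hcoup : IsCoupling γ' μ := by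
    intro j
    by_cases hj : j = i
    · subst hj; rw [hi, Measure.snd_map_swap]; exact hπ1
    · rw [hother j hj, Measure.snd_map_prodMk hybarm, Measure.map_id']; exact hγm j
  have hcost : ∫ x, mmcost x ∂γ = ∫ x, ∑ j, dist (x j) (ybar x) ^ 2 / 2 ∂γ :=
    integral_congr_ae (hybar.mono fun x hx => mmcost_eq_of_forall_le hx)
  rw [integral_map hρ.aemeasurable (by fun_prop), integral_map hρ.aemeasurable (by fun_prop),
    integral_map measurable_swap.aemeasurable (by fun_prop), ← hcost] at hle
  rw [integral_map hmi.aemeasurable (by fun_prop)]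
  have hγ' := hopt γ' hcoup
  simp only [Prod.fst_swap, Prod.snd_swap, integral_div] at hle
  linarith

/-- Let `γ` be the optimal multi-marginal plan for the barycenter cost on a
compact Riemannian manifold (abstracted), `μ₁ ≪ vol`, `πᵢ` the `i`-th coordinate projection,
and `ȳ` the `γ`-a.e. defined Fréchet-mean map.  Then for each `i` the measure
`γᵢ := (πᵢ, ȳ)_# γ` on `M × M` is an optimal plan for the two-marginal Monge–Kantorovich
problem with cost `d²(x,y)` and marginals `μᵢ` and the barycenter `ν = ȳ_# γ`. -/
theorem stmt_11 {M : Type*} [MetricSpace M] [CompactSpace M] [Nonempty M]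
    [MeasurableSpace M] [BorelSpace M]
    (vol : Measure M) (m : ℕ)
    (μ : Fin (m + 1) → Measure M) [∀ i, IsProbabilityMeasure (μ i)]
    (habs : μ 0 ≪ vol)
    (γ : Measure (Fin (m + 1) → M))
    (hγm : IsCoupling γ μ)
    (hopt : ∀ γ' : Measure (Fin (m + 1) → M), IsCoupling γ' μ →
      ∫ x, mmcost x ∂γ ≤ ∫ x, mmcost x ∂γ')
    (ybar : (Fin (m + 1) → M) → M) (hybarm : Measurable ybar)
    (hybar : ∀ᵐ x ∂γ, ∀ z : M, ∑ i, dist (x i) (ybar x) ^ 2 ≤ ∑ i, dist (x i) z ^ 2)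
    (i : Fin (m + 1)) :
    (γ.map (fun x => (x i, ybar x))).map Prod.fst = μ i ∧
    (γ.map (fun x => (x i, ybar x))).map Prod.snd = γ.map ybar ∧
    ∀ π : Measure (M × M), π.map Prod.fst = μ i → π.map Prod.snd = γ.map ybar →
      ∫ p, dist p.1 p.2 ^ 2 ∂(γ.map (fun x => (x i, ybar x)))
        ≤ ∫ p, dist p.1 p.2 ^ 2 ∂π :=
  stmt_11_general m μ γ hγm hopt ybar hybarm hybar i
end
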